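/- Let f : [0,1]^d → ℝ be continuously differentiable and fix i ∈ {1,…,d}. Assume the total variance D > 0 and that u_i is not identically zero (equivalently D_i^tot > 0). Then the strict inequality (∫_{H^d} [f(1,z) − f(0,z)]·[f(1,z) + f(0,z) − 2f(x)] dx)² / (4 ν_i D) < S_i^tot holds (lower bound LB1). -/

import Mathlib

open MeasureTheory Real

noncomputable section

/-- The unit cube `[0,1]^d` in `ℝ^d`. -/
def unitCube (d : ℕ) : Set (Fin d → ℝ) := Set.Icc 0 1

/-- The partial derivative `∂f/∂x_i` at the point `x`. -/
def pderivI {d : ℕ} (f : (Fin d → ℝ) → ℝ) (i : Fin d) (x : Fin d → ℝ) : ℝ :=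
  deriv (fun t : ℝ => f (Function.update x i t)) (x i)

/-- `u_i(x) = f(x) - ∫₀¹ f(x₁,…,x_{i-1},t,x_{i+1},…,x_d) dt`, the sum of all ANOVA
terms of `f` depending on `x_i`. -/
def uComp {d : ℕ} (f : (Fin d → ℝ) → ℝ) (i : Fin d) (x : Fin d → ℝ) : ℝ :=
  f x - ∫ t in (0:ℝ)..1, f (Function.update x i t)

/-- The total variance `D = ∫ f² dx − (∫ f dx)²` over the unit cube. -/
def totVar {d : ℕ} (f : (Fin d → ℝ) → ℝ) : ℝ :=
  (∫ x in unitCube d, (f x) ^ 2) - (∫ x in unitCube d, f x) ^ 2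

/-- The total partial variance `D_i^tot = ∫ u_i² dx`. -/
def DTot {d : ℕ} (f : (Fin d → ℝ) → ℝ) (i : Fin d) : ℝ :=
  ∫ x in unitCube d, (uComp f i x) ^ 2

/-- The total Sobol' sensitivity index `S_i^tot = D_i^tot / D`. -/
def STot {d : ℕ} (f : (Fin d → ℝ) → ℝ) (i : Fin d) : ℝ :=
  DTot f i / totVar f

/-- The DGSM `ν_i = ∫ (∂f/∂x_i)² dx`. -/
def nuDGSM {d : ℕ} (f : (Fin d → ℝ) → ℝ) (i : Fin d) : ℝ :=
  ∫ x in unitCube d, (pderivI f i x) ^ 2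

/-- The DGSM `w_i^{(m)} = ∫ x_i^m (∂f/∂x_i) dx`. -/
def wDGSM {d : ℕ} (f : (Fin d → ℝ) → ℝ) (i : Fin d) (m : ℝ) : ℝ :=
  ∫ x in unitCube d, (x i) ^ m * pderivI f i x

/-- The DGSM `ς_i = (1/2) ∫ x_i (1 - x_i) (∂f/∂x_i)² dx`. -/
def sigmaDGSM {d : ℕ} (f : (Fin d → ℝ) → ℝ) (i : Fin d) : ℝ :=
  (1 / 2) * ∫ x in unitCube d, x i * (1 - x i) * (pderivI f i x) ^ 2

/-!
On a line in direction `i` put `g t = f (update x i t)`. The fundamental theorem of calculus gives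
`∫₀¹ (g 1 - g 0) (g 1 + g 0 - 2 g t) dt = ∫₀¹ 2 (g t - ∫₀¹ g) g' t dt`, so averaging over the
cube turns the numerator of LB1 into `2 ∫ u_i ∂_i f`. By Cauchy–Schwarz its square is at most
`4 D_i^tot ν_i`. Equality would force `∂_i f = c u_i` on the cube; then on every line `g - ∫₀¹ g`
solves `y' = c y` and has mean zero, so, being a multiple of `exp (c t)`, it vanishes. Hence
`u_i = 0`, contradicting `D_i^tot > 0`.
-/

open Function Set

section UpdatePi

theorem preimage_update_univ_pi {ι : Type*} [DecidableEq ι] {X : ι → Type*} (i : ι)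
    (s : ∀ j, Set (X j)) :
    (fun p : (∀ j, X j) × X i => update p.1 i p.2) ⁻¹' univ.pi s
      = univ.pi (update s i univ) ×ˢ s i := by
  ext ⟨x, t⟩
  simp only [mem_preimage, mem_univ_pi, mem_prod]
  grind

variable {ι : Type*} [Fintype ι] [DecidableEq ι] {X : ι → Type*} [∀ j, MeasurableSpace (X j)]
  (μ : ∀ j, Measure (X j)) [∀ j, SigmaFinite (μ j)] (i : ι) [IsProbabilityMeasure (μ i)]

theorem measurePreserving_update_pi :
    MeasurePreserving (fun p : (∀ j, X j) × X i => update p.1 i p.2)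
      ((Measure.pi μ).prod (μ i)) (Measure.pi μ) := by
  refine ⟨measurable_update', (Measure.pi_eq fun s hs => ?_).symm⟩
  rw [Measure.map_apply measurable_update' (.univ_pi hs), preimage_update_univ_pi,
    Measure.prod_prod, Measure.pi_pi, ← Finset.mul_prod_erase _ _ (Finset.mem_univ i),
    ← Finset.mul_prod_erase _ _ (Finset.mem_univ i)]
  rw [Finset.prod_congr rfl fun j hj => by rw [update_of_ne (Finset.ne_of_mem_erase hj)]]
  simp [mul_comm]

theorem integral_integral_update_pi {E : Type*} [NormedAddCommGroup E] [NormedSpace ℝ E]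
    {h : (∀ j, X j) → E} (hh : Integrable h (Measure.pi μ)) :
    ∫ x, ∫ t, h (update x i t) ∂μ i ∂Measure.pi μ = ∫ x, h x ∂Measure.pi μ := by
  have hφ := measurePreserving_update_pi μ i
  have hcomp : Integrable (fun p : (∀ j, X j) × X i => h (update p.1 i p.2)) _ :=
    hφ.integrable_comp_of_integrable hh
  rw [← integral_prod _ hcomp, ← integral_map hφ.measurable.aemeasurable, hφ.map_eq]
  rw [hφ.map_eq]
  exact hh.aestronglyMeasurable

end UpdatePi

theorem volume_restrict_unitCube (d : ℕ) :
    volume.restrict (unitCube d)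
      = Measure.pi fun _ : Fin d => volume.restrict (Icc (0 : ℝ) 1) := by
  rw [unitCube, ← pi_univ_Icc, volume_pi, Measure.restrict_pi_pi]; rfl

theorem integral_unitCube_integral_update {d : ℕ} (i : Fin d) {h : (Fin d → ℝ) → ℝ}
    (hh : IntegrableOn h (unitCube d)) :
    ∫ x in unitCube d, ∫ t in (0 : ℝ)..1, h (update x i t) = ∫ x in unitCube d, h x := by
  have : IsProbabilityMeasure (volume.restrict (Icc (0 : ℝ) 1)) := ⟨by simp⟩
  simp_rw [intervalIntegral.integral_of_le zero_le_one, ← integral_Icc_eq_integral_Ioc]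
  rw [IntegrableOn, volume_restrict_unitCube] at hh
  rw [volume_restrict_unitCube]
  exact integral_integral_update_pi _ i hh

theorem integral_sub_mul_sub_two_mul_eq {g g' : ℝ → ℝ} (hg : ∀ t, HasDerivAt g (g' t) t)
    (hg' : Continuous g') :
    ∫ t in (0 : ℝ)..1, (g 1 - g 0) * (g 1 + g 0 - 2 * g t)
      = ∫ t in (0 : ℝ)..1, 2 * ((g t - ∫ s in (0 : ℝ)..1, g s) * g' t) := by
  have hgc : Continuous g := continuous_iff_continuousAt.2 fun t => (hg t).continuousAt
  have hgg' : Continuous fun t => 2 * g t * g' t := by fun_prop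
  set M := ∫ s in (0 : ℝ)..1, g s
  have hsq : ∫ t in (0 : ℝ)..1, 2 * g t * g' t = g 1 ^ 2 - g 0 ^ 2 :=
    intervalIntegral.integral_eq_sub_of_hasDerivAt (fun t _ => by simpa using (hg t).pow 2)
      (hgg'.intervalIntegrable _ _)
  have hlin : ∫ t in (0 : ℝ)..1, g' t = g 1 - g 0 :=
    intervalIntegral.integral_eq_sub_of_hasDerivAt (fun t _ => hg t) (hg'.intervalIntegrable _ _)
  calc ∫ t in (0 : ℝ)..1, (g 1 - g 0) * (g 1 + g 0 - 2 * g t)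
      = ∫ t in (0 : ℝ)..1, ((g 1 - g 0) * (g 1 + g 0) - 2 * (g 1 - g 0) * g t) := by
        congr 1; ext t; ring
    _ = (g 1 - g 0) * (g 1 + g 0) - 2 * (g 1 - g 0) * M := by
        rw [intervalIntegral.integral_sub intervalIntegrable_const
          ((hgc.intervalIntegrable _ _).const_mul _), intervalIntegral.integral_const_mul]
        simp [M]
    _ = (g 1 ^ 2 - g 0 ^ 2) - 2 * M * (g 1 - g 0) := by ring
    _ = ∫ t in (0 : ℝ)..1, (2 * g t * g' t - 2 * M * g' t) := by
        rw [intervalIntegral.integral_sub (hgg'.intervalIntegrable _ _)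
          ((hg'.intervalIntegrable _ _).const_mul _), intervalIntegral.integral_const_mul,
          hsq, hlin]
    _ = ∫ t in (0 : ℝ)..1, 2 * ((g t - M) * g' t) := by
        congr 1; ext t; ring

theorem eqOn_zero_of_hasDerivAt_const_mul_of_integral_eq_zero {G : ℝ → ℝ} {a b c : ℝ}
    (hab : a < b) (hG : ∀ t ∈ Icc a b, HasDerivAt G (c * G t) t) (hint : ∫ t in a..b, G t = 0) :
    EqOn G 0 (Icc a b) := by
  have hGc : ContinuousOn G (Icc a b) := fun t ht => (hG t ht).continuousAt.continuousWithinAt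
  have hconst : ∀ t ∈ Icc a b, G t * exp (-(c * t)) = G a * exp (-(c * a)) := by
    refine constant_of_has_deriv_right_zero (hGc.mul (by fun_prop)) fun t ht => ?_
    have hexp := ((hasDerivAt_id t).const_mul c).neg.exp
    refine (((hG t (Ico_subset_Icc_self ht)).mul hexp).congr_deriv ?_).hasDerivWithinAt
    simp only [id_eq, Pi.neg_apply, mul_one, mul_neg]
    ring
  set K := G a * exp (-(c * a))
  have hGexp : EqOn G (fun t => K * exp (c * t)) (Icc a b) := fun t ht => by
    show G t = K * exp (c * t)
    rw [← hconst t ht, mul_assoc, ← exp_add, neg_add_cancel, exp_zero, mul_one]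
  have hK : K * ∫ t in a..b, exp (c * t) = 0 := by
    rw [← intervalIntegral.integral_const_mul, ← hint]
    exact (intervalIntegral.integral_congr (by rwa [uIcc_of_le hab.le])).symm
  have hexp_pos : 0 < ∫ t in a..b, exp (c * t) :=
    intervalIntegral.intervalIntegral_pos_of_pos
      (Continuous.intervalIntegrable (by fun_prop) _ _) (fun t => exp_pos _) hab
  have hK0 : K = 0 := (mul_eq_zero.1 hK).resolve_right hexp_pos.ne'
  intro t ht
  simp [hGexp ht, hK0]

theorem sq_integral_mul_lt_of_forall_not_ae_eq {α : Type*} [MeasurableSpace α] {μ : Measure α}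
    {u p : α → ℝ} (hu : Integrable (fun x => u x ^ 2) μ) (hp : Integrable (fun x => p x ^ 2) μ)
    (hup : Integrable (fun x => u x * p x) μ) (hu0 : 0 < ∫ x, u x ^ 2 ∂μ)
    (hne : ∀ c : ℝ, ¬ p =ᵐ[μ] fun x => c * u x) :
    (∫ x, u x * p x ∂μ) ^ 2 < (∫ x, u x ^ 2 ∂μ) * ∫ x, p x ^ 2 ∂μ := by
  set A := ∫ x, u x ^ 2 ∂μ
  set S := ∫ x, u x * p x ∂μ
  set c := S / A
  have hsplit : (fun x => (p x - c * u x) ^ 2)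
      = fun x => p x ^ 2 - 2 * c * (u x * p x) + c ^ 2 * u x ^ 2 := by ext x; ring
  have hint : Integrable (fun x => (p x - c * u x) ^ 2) μ := by
    rw [hsplit]; exact (hp.sub (hup.const_mul _)).add (hu.const_mul _)
  have hQ : ∫ x, (p x - c * u x) ^ 2 ∂μ = ∫ x, p x ^ 2 ∂μ - 2 * c * S + c ^ 2 * A := by
    have hp_sub : Integrable (fun x => p x ^ 2 - 2 * c * (u x * p x)) μ :=
      hp.sub (hup.const_mul _)
    rw [hsplit, integral_add hp_sub (hu.const_mul _),
      integral_sub hp (hup.const_mul _), integral_const_mul, integral_const_mul]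
  have hQpos : 0 < ∫ x, (p x - c * u x) ^ 2 ∂μ := by
    refine (integral_nonneg fun x => sq_nonneg _).lt_of_ne fun h => hne c ?_
    filter_upwards [(integral_eq_zero_iff_of_nonneg (fun x => sq_nonneg _) hint).1 h.symm]
      with x hx
    simpa [sub_eq_zero] using hx
  rw [hQ] at hQpos
  -- `c • u` is the orthogonal projection of `p` onto `u`.
  have : A * (∫ x, p x ^ 2 ∂μ - 2 * c * S + c ^ 2 * A) = A * ∫ x, p x ^ 2 ∂μ - S ^ 2 := by
    simp only [c]; field_simp; ring
  nlinarith [mul_pos hu0 hQpos]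

section Fiber

variable {d : ℕ} {f : (Fin d → ℝ) → ℝ} {i : Fin d}

theorem update_mem_unitCube {x : Fin d → ℝ} (hx : x ∈ unitCube d) {t : ℝ} (ht : t ∈ Icc 0 1) :
    update x i t ∈ unitCube d := by
  rw [unitCube, ← pi_univ_Icc] at hx ⊢
  exact (update_mem_pi_iff_of_mem hx).2 fun _ => ht

theorem unitCube_subset_closure_interior (d : ℕ) :
    unitCube d ⊆ closure (interior (unitCube d)) := by
  simp [unitCube, ← pi_univ_Icc, interior_pi_set, closure_pi_set]

theorem pderivI_update (x : Fin d → ℝ) (t : ℝ) :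
    pderivI f i (update x i t) = deriv (fun s => f (update x i s)) t := by
  simp [pderivI]

theorem hasDerivAt_update_pderivI {x : Fin d → ℝ} {t : ℝ}
    (hf : DifferentiableAt ℝ f (update x i t)) :
    HasDerivAt (fun s => f (update x i s)) (pderivI f i (update x i t)) t := by
  rw [pderivI_update]
  exact (hf.comp t (hasDerivAt_update x i t).differentiableAt).hasDerivAt

theorem pderivI_eq_fderiv {x : Fin d → ℝ} (hf : DifferentiableAt ℝ f x) :
    pderivI f i x = fderiv ℝ f x (Pi.single i 1) := by
  have h := hf.hasFDerivAt.comp_hasDerivAt_of_eq (x i) (hasDerivAt_update x i (x i))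
    (update_eq_self i x).symm
  exact h.deriv

theorem continuous_pderivI (hf : ContDiff ℝ 1 f) : Continuous (pderivI f i) := by
  simp_rw [funext fun x => pderivI_eq_fderiv (i := i) (hf.differentiable one_ne_zero x)]
  exact (hf.continuous_fderiv one_ne_zero).clm_apply continuous_const

theorem uComp_update (x : Fin d → ℝ) (t : ℝ) :
    uComp f i (update x i t) = f (update x i t) - ∫ s in (0 : ℝ)..1, f (update x i s) := by
  simp [uComp]

theorem continuous_uComp (hf : Continuous f) : Continuous (uComp f i) :=
  hf.sub (intervalIntegral.continuous_parametric_intervalIntegral_of_continuous'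
    (by fun_prop) 0 1)

theorem hasDerivAt_uComp_update {x : Fin d → ℝ} {t : ℝ}
    (hf : DifferentiableAt ℝ f (update x i t)) :
    HasDerivAt (fun s => uComp f i (update x i s)) (pderivI f i (update x i t)) t := by
  simp_rw [uComp_update]
  exact (hasDerivAt_update_pderivI hf).sub_const _

theorem integral_uComp_update (hf : Continuous f) (x : Fin d → ℝ) :
    ∫ t in (0 : ℝ)..1, uComp f i (update x i t) = 0 := by
  simp_rw [uComp_update]
  rw [intervalIntegral.integral_sub (Continuous.intervalIntegrable (by fun_prop) _ _)
    intervalIntegrable_const]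
  simp

theorem integral_boundary_product_eq (hf : ContDiff ℝ 1 f) :
    ∫ x in unitCube d, (f (update x i 1) - f (update x i 0))
        * (f (update x i 1) + f (update x i 0) - 2 * f x)
      = 2 * ∫ x in unitCube d, uComp f i x * pderivI f i x := by
  have hfc := hf.continuous
  have hpc : Continuous (pderivI f i) := continuous_pderivI hf
  have huc : Continuous (uComp f i) := continuous_uComp hfc
  have hB : IntegrableOn (fun x => (f (update x i 1) - f (update x i 0))
      * (f (update x i 1) + f (update x i 0) - 2 * f x)) (unitCube d) :=
    Continuous.integrableOn_Icc (by fun_prop)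
  have hup : IntegrableOn (fun x => 2 * (uComp f i x * pderivI f i x)) (unitCube d) :=
    Continuous.integrableOn_Icc (by fun_prop)
  rw [← integral_unitCube_integral_update i hB, ← integral_const_mul,
    ← integral_unitCube_integral_update i hup]
  congr 1; ext x
  simp only [update_idem, uComp_update]
  exact integral_sub_mul_sub_two_mul_eq
    (fun t => hasDerivAt_update_pderivI (hf.differentiable one_ne_zero _)) (by fun_prop)

theorem uComp_eqOn_zero_of_pderivI_eqOn (hf : ContDiff ℝ 1 f) {c : ℝ}
    (hc : EqOn (pderivI f i) (fun x => c * uComp f i x) (unitCube d)) :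
    EqOn (uComp f i) 0 (unitCube d) := by
  intro x hx
  have hfiber : EqOn (fun t => uComp f i (update x i t)) 0 (Icc 0 1) := by
    refine eqOn_zero_of_hasDerivAt_const_mul_of_integral_eq_zero (c := c) zero_lt_one
      (fun t ht => ?_) (integral_uComp_update hf.continuous x)
    have hderiv := hasDerivAt_uComp_update (hf.differentiable one_ne_zero (update x i t))
    rwa [hc (update_mem_unitCube hx ht)] at hderiv
  simpa using hfiber ⟨hx.1 i, hx.2 i⟩

theorem sq_integral_uComp_mul_pderivI_lt (hf : ContDiff ℝ 1 f) (hui : 0 < DTot f i) :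
    (∫ x in unitCube d, uComp f i x * pderivI f i x) ^ 2 < DTot f i * nuDGSM f i := by
  have hpc : Continuous (pderivI f i) := continuous_pderivI hf
  have huc : Continuous (uComp f i) := continuous_uComp hf.continuous
  refine sq_integral_mul_lt_of_forall_not_ae_eq (by fun_prop : Continuous _).integrableOn_Icc
    (by fun_prop : Continuous _).integrableOn_Icc (by fun_prop : Continuous _).integrableOn_Icc
    hui fun c hc => hui.ne' ?_
  have hu0 := uComp_eqOn_zero_of_pderivI_eqOn hf <| Measure.eqOn_of_ae_eq hc hpc.continuousOn
    (by fun_prop) (unitCube_subset_closure_interior d)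
  exact setIntegral_eq_zero_of_forall_eq_zero fun x hx => by simp [hu0 hx]

end Fiber

/-- **Theorem 2 (lower bound LB1).** For `f` continuously differentiable on the unit cube with
`D > 0` and `u_i` not identically zero (i.e. `D_i^tot > 0`), one has the strict lower bound
`(∫ [f(1,z) − f(0,z)]·[f(1,z) + f(0,z) − 2f(x)] dx)² / (4 ν_i D) < S_i^tot`. -/
theorem dgsm_lower_bound_LB1 (d : ℕ) (f : (Fin d → ℝ) → ℝ) (hf : ContDiff ℝ 1 f)
    (i : Fin d) (hD : 0 < totVar f) (hui : 0 < DTot f i) :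
    (∫ x in unitCube d,
        (f (Function.update x i 1) - f (Function.update x i 0)) *
          (f (Function.update x i 1) + f (Function.update x i 0) - 2 * f x)) ^ 2 /
      (4 * nuDGSM f i * totVar f) < STot f i := by
  have hS := sq_integral_uComp_mul_pderivI_lt hf hui
  have hν : 0 < nuDGSM f i := pos_of_mul_pos_right ((sq_nonneg _).trans_lt hS) hui.le
  rw [integral_boundary_product_eq hf, STot, div_lt_div_iff₀ (by positivity) hD]
  nlinarith [mul_lt_mul_of_pos_right hS hD]
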